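/- arXiv:2009.00592 — 2 statements merged into one kernel-verified Lean document; each statement's English description precedes it below -/
import Mathlib

section
/- Let ρ ⊆ (ℤ₊)^d be the shape of a d-dimensional partition, and n ∈ ℕ. The last-passage map Φ restricts to a bijection between the set M(ρ,n) of d-dimensional ℕ-matrices whose support is contained in ρ and whose largest last passage time G(1,...,1) is at most n, and the set P(ρ,n) of d-dimensional partitions π with shape(π) ⊆ ρ and π(1,...,1) ≤ n. -/
open scoped BigOperators

noncomputable section

namespace HDP

variable {d : ℕ}

/-- The step `i → i + e_ℓ` in `ℤ₊^d` (coordinates are 0-based). -/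
def step (i : Fin d → ℕ) (ℓ : Fin d) : Fin d → ℕ := Function.update i ℓ (i ℓ + 1)

/-- `p` is a directed lattice path of length `n` starting at `i`:
each step goes from a point to the point plus a standard basis vector. -/
def IsPathFrom (i : Fin d → ℕ) (n : ℕ) (p : ℕ → Fin d → ℕ) : Prop :=
  p 0 = i ∧ ∀ t < n, ∃ ℓ, p (t + 1) = step (p t) ℓ

/-- The last passage time `G(i)`: the maximum, over directed lattice paths starting
at `i`, of the sum of the entries of `A` along the path. -/
def lpt (A : (Fin d → ℕ) → ℕ) (i : Fin d → ℕ) : ℕ :=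
  sSup {s | ∃ n p, IsPathFrom i n p ∧ s = ∑ t ∈ Finset.range (n + 1), A (p t)}

/-- A `d`-dimensional partition: a finitely supported function `ℤ₊^d → ℕ`
which is weakly decreasing in each coordinate. -/
def IsPartition (π : (Fin d → ℕ) → ℕ) : Prop :=
  (Function.support π).Finite ∧ ∀ i j : Fin d → ℕ, (∀ k, i k ≤ j k) → π j ≤ π i

/-- The set of corners of a `d`-dimensional partition `π` : points `(i, k)` of the
diagram of `π` (i.e. `1 ≤ k ≤ π i`) such that `(i + e ℓ, k)` is not in the diagram
for every `ℓ ∈ [d]`. -/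
def Cor (π : (Fin d → ℕ) → ℕ) : Set ((Fin d → ℕ) × ℕ) :=
  {p | 1 ≤ p.2 ∧ p.2 ≤ π p.1 ∧ ∀ ℓ, π (step p.1 ℓ) < p.2}

/-- The number of corners of `π`. -/
def cor (π : (Fin d → ℕ) → ℕ) : ℕ := Nat.card (Cor π)

/-- The corner-hook volume of `π`: the sum over corners `(i, k)` of
`i₁ + ⋯ + i_d - d + 1` (in 1-based coordinates; with our 0-based
coordinates this cohook length is `(∑ j, i j) + 1`). -/
def chvol (π : (Fin d → ℕ) → ℕ) : ℕ := ∑ᶠ p ∈ Cor π, ((∑ j, p.1 j) + 1)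

/-- A set is down-closed for the componentwise order. -/
def DownClosed (ρ : Set (Fin d → ℕ)) : Prop :=
  ∀ i j : Fin d → ℕ, (∀ k, i k ≤ j k) → j ∈ ρ → i ∈ ρ

/-- The set of top corners of a shape `ρ`. -/
def Cr (ρ : Set (Fin d → ℕ)) : Set (Fin d → ℕ) := {i ∈ ρ | ∀ ℓ, step i ℓ ∉ ρ}


lemma le_step (i : Fin d → ℕ) (ℓ : Fin d) (k : Fin d) : i k ≤ step i ℓ k := by
  unfold step
  rcases eq_or_ne k ℓ with rfl | h
  · simp
  · rw [Function.update_of_ne h]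

lemma step_sum (i : Fin d → ℕ) (ℓ : Fin d) : ∑ j, step i ℓ j = (∑ j, i j) + 1 := by
  unfold step
  rw [Finset.sum_update_of_mem (Finset.mem_univ ℓ)]
  have := Finset.add_sum_erase Finset.univ i (Finset.mem_univ ℓ)
  rw [← Finset.sdiff_singleton_eq_erase] at this
  omega

/-- the set of path sums -/
def PS (A : (Fin d → ℕ) → ℕ) (i : Fin d → ℕ) : Set ℕ :=
  {s | ∃ n p, IsPathFrom i n p ∧ s = ∑ t ∈ Finset.range (n + 1), A (p t)}

lemma lpt_def (A : (Fin d → ℕ) → ℕ) (i : Fin d → ℕ) : lpt A i = sSup (PS A i) := rfl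

lemma PS_nonempty (A : (Fin d → ℕ) → ℕ) (i : Fin d → ℕ) : (PS A i).Nonempty :=
  ⟨A i, 0, fun _ => i, ⟨rfl, fun t ht => absurd ht (by omega)⟩, by simp⟩

lemma path_ge {i : Fin d → ℕ} {n : ℕ} {p : ℕ → Fin d → ℕ} (h : IsPathFrom i n p) :
    ∀ t ≤ n, ∀ k, i k ≤ p t k := by
  intro t
  induction t with
  | zero => intro _ k; rw [h.1]
  | succ t ih =>
    intro ht k
    obtain ⟨ℓ, hℓ⟩ := h.2 t (by omega)
    rw [hℓ]
    exact le_trans (ih (by omega) k) (le_step _ _ _)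

lemma path_sum {i : Fin d → ℕ} {n : ℕ} {p : ℕ → Fin d → ℕ} (h : IsPathFrom i n p) :
    ∀ t ≤ n, ∑ k, p t k = (∑ k, i k) + t := by
  intro t
  induction t with
  | zero => intro _; rw [h.1]; omega
  | succ t ih =>
    intro ht
    obtain ⟨ℓ, hℓ⟩ := h.2 t (by omega)
    rw [hℓ, step_sum, ih (by omega)]; omega

lemma PS_bddAbove {A : (Fin d → ℕ) → ℕ} (hA : (Function.support A).Finite)
    (i : Fin d → ℕ) : BddAbove (PS A i) := by
  refine ⟨∑ j ∈ hA.toFinset, A j, ?_⟩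
  rintro s ⟨n, p, hp, rfl⟩
  have hinj : Set.InjOn p (Finset.range (n + 1)) := by
    intro t1 h1 t2 h2 he
    simp only [Finset.coe_range, Set.mem_Iio] at h1 h2
    have e1 := path_sum hp t1 (by omega)
    have e2 := path_sum hp t2 (by omega)
    rw [he] at e1
    omega
  rw [← Finset.sum_image (fun x hx y hy => hinj hx hy)]
  calc ∑ j ∈ (Finset.range (n+1)).image p, A j
      ≤ ∑ j ∈ (Finset.range (n+1)).image p ∪ hA.toFinset, A j :=
        Finset.sum_le_sum_of_subset Finset.subset_union_left
    _ = ∑ j ∈ hA.toFinset, A j := by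
        refine (Finset.sum_subset Finset.subset_union_right ?_).symm
        intro x _ hx
        simpa using hx

lemma lpt_mem {A : (Fin d → ℕ) → ℕ} (hA : (Function.support A).Finite)
    (i : Fin d → ℕ) : lpt A i ∈ PS A i :=
  Nat.sSup_mem (PS_nonempty A i) (PS_bddAbove hA i)

lemma le_lpt {A : (Fin d → ℕ) → ℕ} (hA : (Function.support A).Finite)
    {i : Fin d → ℕ} {s : ℕ} (hs : s ∈ PS A i) : s ≤ lpt A i :=
  le_csSup (PS_bddAbove hA i) hs

lemma lpt_rec {A : (Fin d → ℕ) → ℕ} (hA : (Function.support A).Finite)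
    (i : Fin d → ℕ) :
    lpt A i = A i + Finset.univ.sup fun ℓ => lpt A (step i ℓ) := by
  apply le_antisymm
  · -- every path sum is ≤ RHS
    obtain ⟨m, p, hp, he⟩ := lpt_mem hA i
    rw [he]
    rcases m with _ | m
    · simp [hp.1]
    · obtain ⟨ℓ, hℓ⟩ := hp.2 0 (by omega)
      have hq : IsPathFrom (step i ℓ) m (fun t => p (t + 1)) := by
        refine ⟨?_, fun t ht => ?_⟩
        · show p (0 + 1) = step i ℓ
          rw [hℓ, hp.1]
        · exact hp.2 (t + 1) (by omega)
      have hmem : (∑ t ∈ Finset.range (m + 1), A (p (t + 1))) ∈ PS A (step i ℓ) :=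
        ⟨m, _, hq, rfl⟩
      have h1 := le_lpt hA hmem
      have h2 : lpt A (step i ℓ) ≤ Finset.univ.sup fun ℓ => lpt A (step i ℓ) :=
        Finset.le_sup (f := fun ℓ => lpt A (step i ℓ)) (Finset.mem_univ ℓ)
      rw [Finset.sum_range_succ' _ (m + 1), hp.1]
      omega
  · rcases isEmpty_or_nonempty (Fin d) with hd | hd
    · simp only [Finset.univ_eq_empty, Finset.sup_empty, bot_eq_zero, add_zero]
      have : A i ∈ PS A i := ⟨0, fun _ => i, ⟨rfl, fun t ht => absurd ht (by omega)⟩, by simp⟩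
      exact le_lpt hA this
    · obtain ⟨ℓ, -, he⟩ := Finset.exists_mem_eq_sup Finset.univ Finset.univ_nonempty
        fun ℓ => lpt A (step i ℓ)
      rw [he]
      obtain ⟨m, q, hq, hqe⟩ := lpt_mem hA (step i ℓ)
      set p : ℕ → Fin d → ℕ := fun t => if t = 0 then i else q (t - 1) with hpdef
      have hp : IsPathFrom i (m + 1) p := by
        constructor
        · simp [hpdef]
        · intro t ht
          rcases t with _ | t
          · exact ⟨ℓ, by simp [hpdef, hq.1]⟩
          · obtain ⟨ℓ', hℓ'⟩ := hq.2 t (by omega)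
            exact ⟨ℓ', by simpa [hpdef] using hℓ'⟩
      have hmem : (∑ t ∈ Finset.range (m + 2), A (p t)) ∈ PS A i := ⟨m + 1, p, hp, rfl⟩
      have hsum : ∑ t ∈ Finset.range (m + 2), A (p t)
          = A i + ∑ t ∈ Finset.range (m + 1), A (q t) := by
        rw [Finset.sum_range_succ' _ (m + 1)]
        simp only [hpdef]
        simp [add_comm]
      have := le_lpt hA hmem
      rw [hsum, ← hqe] at this
      exact this

lemma lpt_step_le {A : (Fin d → ℕ) → ℕ} (hA : (Function.support A).Finite)
    (i : Fin d → ℕ) (ℓ : Fin d) : lpt A (step i ℓ) ≤ lpt A i := by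
  rw [lpt_rec hA i]
  exact le_trans (Finset.le_sup (f := fun ℓ => lpt A (step i ℓ)) (Finset.mem_univ ℓ))
    (Nat.le_add_left _ _)

lemma lpt_anti {A : (Fin d → ℕ) → ℕ} (hA : (Function.support A).Finite) :
    ∀ m (i j : Fin d → ℕ), (∑ k, j k) ≤ (∑ k, i k) + m → (∀ k, i k ≤ j k) →
      lpt A j ≤ lpt A i := by
  intro m
  induction m with
  | zero =>
    intro i j hs hle
    have : i = j := by
      by_contra hne
      obtain ⟨k, hk⟩ := Function.ne_iff.mp hne
      have : (∑ k, i k) < ∑ k, j k :=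
        Finset.sum_lt_sum (fun k _ => hle k) ⟨k, Finset.mem_univ k, lt_of_le_of_ne (hle k) hk⟩
      omega
    rw [this]
  | succ m ih =>
    intro i j hs hle
    rcases eq_or_ne i j with rfl | hne
    · exact le_refl _
    · obtain ⟨k, hk⟩ := Function.ne_iff.mp hne
      have hk' : i k < j k := lt_of_le_of_ne (hle k) hk
      have h1 : lpt A j ≤ lpt A (step i k) := by
        apply ih
        · rw [step_sum]; omega
        · intro k'
          unfold step
          rcases eq_or_ne k' k with rfl | h
          · simpa using hk'
          · rw [Function.update_of_ne h]; exact hle k'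
      exact h1.trans (lpt_step_le hA i k)

lemma lpt_support_subset {A : (Fin d → ℕ) → ℕ} (hA : (Function.support A).Finite) :
    Function.support (lpt A) ⊆ {i | ∃ j ∈ Function.support A, ∀ k, i k ≤ j k} := by
  intro i hi
  obtain ⟨m, p, hp, he⟩ := lpt_mem hA i
  have : ∃ t ∈ Finset.range (m + 1), A (p t) ≠ 0 := by
    by_contra hc
    push_neg at hc
    have : lpt A i = 0 := by
      rw [he]; exact Finset.sum_eq_zero hc
    exact hi this
  obtain ⟨t, ht, hAt⟩ := this
  exact ⟨p t, hAt, path_ge hp t (by simpa using Nat.lt_succ_iff.mp (Finset.mem_range.mp ht))⟩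

lemma downclosure_finite (s : Set (Fin d → ℕ)) (hs : s.Finite) :
    {i : Fin d → ℕ | ∃ j ∈ s, ∀ k, i k ≤ j k}.Finite := by
  have : {i : Fin d → ℕ | ∃ j ∈ s, ∀ k, i k ≤ j k}
      = ⋃ j ∈ s, Set.pi Set.univ fun k => Set.Iic (j k) := by
    ext i
    simp [Set.mem_pi, Set.mem_Iic, Pi.le_def]
  rw [this]
  exact hs.biUnion fun j _ => Set.Finite.pi fun k => Set.finite_Iic _

lemma lpt_support_finite {A : (Fin d → ℕ) → ℕ} (hA : (Function.support A).Finite) :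
    (Function.support (lpt A)).Finite :=
  (downclosure_finite _ hA).subset (lpt_support_subset hA)

lemma lpt_unique {A π : (Fin d → ℕ) → ℕ} (hA : (Function.support A).Finite)
    (hπ : (Function.support π).Finite)
    (hrec : ∀ i, π i = A i + Finset.univ.sup fun ℓ => π (step i ℓ)) :
    lpt A = π := by
  have hG := lpt_support_finite hA
  obtain ⟨N, hzero⟩ : ∃ N : ℕ, ∀ i : Fin d → ℕ, N ≤ ∑ k, i k → lpt A i = 0 ∧ π i = 0 := by
    refine ⟨((hG.toFinset ∪ hπ.toFinset).sup fun j => ∑ k, j k) + 1, fun i hi => ?_⟩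
    constructor
    · by_contra h
      have hm : i ∈ hG.toFinset ∪ hπ.toFinset := by simp [Function.mem_support, h]
      have h2 := Finset.le_sup (f := fun j => ∑ k, j k) hm
      exact absurd hi (not_le.mpr (Nat.lt_succ_of_le h2))
    · by_contra h
      have hm : i ∈ hG.toFinset ∪ hπ.toFinset := by simp [Function.mem_support, h]
      have h2 := Finset.le_sup (f := fun j => ∑ k, j k) hm
      exact absurd hi (not_le.mpr (Nat.lt_succ_of_le h2))
  have key : ∀ m (i : Fin d → ℕ), N ≤ (∑ k, i k) + m → lpt A i = π i := by
    intro m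
    induction m with
    | zero =>
      intro i hi
      obtain ⟨h1, h2⟩ := hzero i (by omega)
      rw [h1, h2]
    | succ m ih =>
      intro i hi
      rw [lpt_rec hA i, hrec i]
      congr 1
      apply Finset.sup_congr rfl
      intro ℓ _
      apply ih
      rw [step_sum]
      omega
  funext i
  exact key N i (by omega)


end HDP

open HDP

/-- `Φ` restricts to a bijection between `M(ρ, n)` and `P(ρ, n)`.
Here `(fun _ => 0) : Fin d → ℕ` is the origin `(1, …, 1)` in 0-based coordinates. -/
theorem lastPassage_bijOn_shape {d : ℕ} (ρ : Set (Fin d → ℕ)) (hfin : ρ.Finite)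
    (hdown : DownClosed ρ) (n : ℕ) :
    Set.BijOn (lpt (d := d))
      {A | (Function.support A).Finite ∧ Function.support A ⊆ ρ ∧ lpt A (fun _ => 0) ≤ n}
      {π | IsPartition π ∧ Function.support π ⊆ ρ ∧ π (fun _ => 0) ≤ n} := by
  refine ⟨?_, ?_, ?_⟩
  · -- MapsTo
    rintro A ⟨hAfin, hAρ, hAn⟩
    refine ⟨⟨lpt_support_finite hAfin,
      fun i j hle => lpt_anti hAfin (∑ k, j k) i j (Nat.le_add_left _ _) hle⟩, ?_, hAn⟩
    intro i hi
    obtain ⟨j, hj, hle⟩ := lpt_support_subset hAfin hi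
    exact hdown i j hle (hAρ hj)
  · -- InjOn
    rintro A ⟨hAfin, -, -⟩ B ⟨hBfin, -, -⟩ hAB
    funext i
    have h1 := lpt_rec hAfin i
    rw [hAB] at h1
    have h2 := lpt_rec hBfin i
    exact Nat.add_right_cancel (h1.symm.trans h2)
  · -- SurjOn
    rintro π ⟨⟨hπfin, hπmono⟩, hπρ, hπn⟩
    set A : (Fin d → ℕ) → ℕ := fun i => π i - Finset.univ.sup fun ℓ => π (step i ℓ)
      with hAdef
    have hsub : ∀ i, (Finset.univ.sup fun ℓ => π (step i ℓ)) ≤ π i := fun i =>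
      Finset.sup_le fun ℓ _ => hπmono i (step i ℓ) (le_step i ℓ)
    have hrec : ∀ i, π i = A i + Finset.univ.sup fun ℓ => π (step i ℓ) := fun i =>
      (Nat.sub_add_cancel (hsub i)).symm
    have hsupp : Function.support A ⊆ Function.support π := by
      intro i hi
      simp only [Function.mem_support] at hi ⊢
      intro h0
      apply hi
      show π i - _ = 0
      rw [h0]
      exact Nat.zero_sub _
    have hAfin := hπfin.subset hsupp
    have heq : lpt A = π := lpt_unique hAfin hπfin hrec
    exact ⟨A, ⟨hAfin, hsupp.trans hπρ, by rw [heq]; exact hπn⟩, heq⟩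
end
end

section
/- Let ρ be a fixed shape of a d-dimensional partition, and let A ∈ M(ρ,∞) with π = Φ(A). Then A(i) > 0 for all top corners i of ρ if and only if shape(π) = ρ. -/
open scoped BigOperators

noncomputable section

open HDP

/-!
Since `A` is finitely supported, the supremum defining `lpt A i` is attained, and `lpt A i ≠ 0`
exactly when some directed path from `i` meets the support of `A`, i.e. when `i` lies below a
point of `supp A`. So `supp (lpt A)` is the lower closure of `supp A`. For a finite lower set `ρ`
the top corners are its maximal elements, and every point of `ρ` lies below one of them; hence a
subset of `ρ` has lower closure `ρ` iff it contains all top corners.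
-/

theorem lowerClosure_eq_iff_setOf_maximal_subset {α : Type*} [PartialOrder α] {ρ S : Set α}
    (hfin : ρ.Finite) (hρ : IsLowerSet ρ) (hS : S ⊆ ρ) :
    (lowerClosure S : Set α) = ρ ↔ {x | Maximal (· ∈ ρ) x} ⊆ S := by
  refine ⟨fun h x hx => ?_, fun h => (lowerClosure_min hS hρ).antisymm fun x hx => ?_⟩
  · obtain ⟨s, hs, hxs⟩ := mem_lowerClosure.mp (h ▸ hx.prop : x ∈ (lowerClosure S : Set α))
    exact hx.eq_of_le (hS hs) hxs ▸ hs
  · obtain ⟨m, hxm, hm⟩ := hfin.exists_le_maximal hx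
    exact mem_lowerClosure.mpr ⟨m, h hm, hxm⟩

namespace HDP

variable {d : ℕ}

theorem DownClosed.isLowerSet {ρ : Set (Fin d → ℕ)} (h : DownClosed ρ) : IsLowerSet ρ :=
  fun _ _ hji hi => h _ _ hji hi

theorem lt_step (i : Fin d → ℕ) (ℓ : Fin d) : i < step i ℓ :=
  lt_update_self_iff.mpr (Nat.lt_succ_self _)

theorem sum_step (i : Fin d → ℕ) (ℓ : Fin d) : ∑ k, step i ℓ k = ∑ k, i k + 1 := by
  rw [step, Finset.sum_update_of_mem (Finset.mem_univ ℓ),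
    Finset.sum_eq_sum_sdiff_singleton_add (Finset.mem_univ ℓ) i]
  omega

theorem exists_step_le_of_lt {i j : Fin d → ℕ} (h : i < j) : ∃ ℓ, step i ℓ ≤ j := by
  obtain ⟨hle, ℓ, hℓ⟩ := Pi.lt_def.mp h
  exact ⟨ℓ, update_le_iff.mpr ⟨hℓ, fun k _ => hle k⟩⟩

namespace IsPathFrom

variable {i : Fin d → ℕ} {n : ℕ} {p : ℕ → Fin d → ℕ}

theorem le_apply (hp : IsPathFrom i n p) {t : ℕ} (ht : t ≤ n) : i ≤ p t := by
  induction t with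
  | zero => exact hp.1.ge
  | succ t ih =>
    obtain ⟨ℓ, hℓ⟩ := hp.2 t ht
    exact (ih (by omega)).trans (hℓ ▸ (lt_step _ ℓ).le)

theorem sum_apply (hp : IsPathFrom i n p) {t : ℕ} (ht : t ≤ n) :
    ∑ k, p t k = ∑ k, i k + t := by
  induction t with
  | zero => rw [hp.1, add_zero]
  | succ t ih =>
    obtain ⟨ℓ, hℓ⟩ := hp.2 t ht
    rw [hℓ, sum_step, ih (by omega), add_assoc]

theorem injOn (hp : IsPathFrom i n p) : Set.InjOn p (Finset.range (n + 1)) := by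
  intro a ha b hb hab
  have := congrArg (fun x => ∑ k, x k) hab
  simp only [Finset.coe_range, Set.mem_Iio] at ha hb this
  rw [hp.sum_apply (by omega), hp.sum_apply (by omega)] at this
  omega

theorem cons {ℓ : Fin d} {q : ℕ → Fin d → ℕ} (hq : IsPathFrom (step i ℓ) n q) :
    IsPathFrom i (n + 1) (fun t => if t = 0 then i else q (t - 1)) := by
  refine ⟨if_pos rfl, fun t ht => ?_⟩
  rcases t with _ | t
  · exact ⟨ℓ, by simp [hq.1]⟩
  · obtain ⟨ℓ', h⟩ := hq.2 t (by omega)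
    exact ⟨ℓ', by simpa using h⟩

theorem sum_le_sum_support {A : (Fin d → ℕ) → ℕ} (hA : (Function.support A).Finite)
    (hp : IsPathFrom i n p) : ∑ t ∈ Finset.range (n + 1), A (p t) ≤ ∑ x ∈ hA.toFinset, A x := by
  rw [← Finset.sum_image hp.injOn]
  exact Finset.sum_le_sum_of_ne_zero fun x _ hx => hA.mem_toFinset.mpr hx

end IsPathFrom

theorem exists_isPathFrom_of_le {i j : Fin d → ℕ} (hij : i ≤ j) :
    ∃ n p, IsPathFrom i n p ∧ p n = j := by
  obtain rfl | hlt := hij.eq_or_lt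
  · exact ⟨0, fun _ => i, ⟨rfl, by simp⟩, rfl⟩
  obtain ⟨ℓ, hℓ⟩ := exists_step_le_of_lt hlt
  obtain ⟨n, q, hq, hqn⟩ := exists_isPathFrom_of_le hℓ
  exact ⟨n + 1, _, hq.cons, by simpa using hqn⟩
termination_by ∑ k, j k - ∑ k, i k
decreasing_by
  have := Finset.sum_le_sum fun k (_ : k ∈ Finset.univ) => hℓ k
  rw [sum_step] at this ⊢
  omega

def pathSums (A : (Fin d → ℕ) → ℕ) (i : Fin d → ℕ) : Set ℕ :=
  {s | ∃ n p, IsPathFrom i n p ∧ s = ∑ t ∈ Finset.range (n + 1), A (p t)}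

theorem lpt_eq_sSup_pathSums (A : (Fin d → ℕ) → ℕ) (i : Fin d → ℕ) :
    lpt A i = sSup (pathSums A i) :=
  rfl

theorem bddAbove_pathSums {A : (Fin d → ℕ) → ℕ} (hA : (Function.support A).Finite)
    (i : Fin d → ℕ) : BddAbove (pathSums A i) :=
  ⟨_, by rintro s ⟨n, p, hp, rfl⟩; exact hp.sum_le_sum_support hA⟩

theorem le_lpt_s7 {A : (Fin d → ℕ) → ℕ} (hA : (Function.support A).Finite)
    {i : Fin d → ℕ} {n : ℕ} {p : ℕ → Fin d → ℕ} (hp : IsPathFrom i n p) :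
    ∑ t ∈ Finset.range (n + 1), A (p t) ≤ lpt A i := by
  rw [lpt_eq_sSup_pathSums]
  exact le_csSup (bddAbove_pathSums hA i) ⟨n, p, hp, rfl⟩

theorem exists_isPathFrom_lpt_eq {A : (Fin d → ℕ) → ℕ} (hA : (Function.support A).Finite)
    (i : Fin d → ℕ) :
    ∃ n p, IsPathFrom i n p ∧ lpt A i = ∑ t ∈ Finset.range (n + 1), A (p t) := by
  rw [lpt_eq_sSup_pathSums]
  have hne : (pathSums A i).Nonempty := ⟨A i, 0, fun _ => i, ⟨rfl, by simp⟩, by simp⟩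
  exact Nat.sSup_mem hne (bddAbove_pathSums hA i)

theorem support_lpt {A : (Fin d → ℕ) → ℕ} (hA : (Function.support A).Finite) :
    Function.support (lpt A) = lowerClosure (Function.support A) := by
  ext i
  simp only [Function.mem_support, SetLike.mem_coe, mem_lowerClosure]
  constructor
  · intro h
    obtain ⟨n, p, hp, hsum⟩ := exists_isPathFrom_lpt_eq hA i
    obtain ⟨t, ht, hAt⟩ := Finset.exists_ne_zero_of_sum_ne_zero (hsum ▸ h)
    exact ⟨p t, hAt, hp.le_apply (Finset.mem_range_succ_iff.mp ht)⟩
  · rintro ⟨j, hAj, hij⟩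
    obtain ⟨n, p, hp, rfl⟩ := exists_isPathFrom_of_le hij
    have hterm : A (p n) ≤ ∑ t ∈ Finset.range (n + 1), A (p t) :=
      Finset.single_le_sum (f := fun t => A (p t)) (fun _ _ => Nat.zero_le _)
        (Finset.self_mem_range_succ n)
    exact (Nat.pos_of_ne_zero hAj |>.trans_le (hterm.trans (le_lpt_s7 hA hp))).ne'

theorem Cr_eq_setOf_maximal {ρ : Set (Fin d → ℕ)} (hρ : IsLowerSet ρ) :
    Cr ρ = {i | Maximal (· ∈ ρ) i} := by
  ext i
  refine ⟨fun ⟨hi, hstep⟩ => ⟨hi, fun j hj hij => ?_⟩,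
    fun hi => ⟨hi.prop, fun ℓ hℓ => (lt_step i ℓ).not_ge (hi.le_of_ge hℓ (lt_step i ℓ).le)⟩⟩
  by_contra hji
  obtain ⟨ℓ, hℓ⟩ := exists_step_le_of_lt (lt_of_le_not_ge hij hji)
  exact hstep ℓ (hρ hℓ hj)

end HDP

/-- For `A ∈ M(ρ, ∞)`, the entries of `A` at all top corners of `ρ` are positive
iff the shape of `Φ(A)` is exactly `ρ`. -/
theorem positive_on_topCorners_iff_shape_eq {d : ℕ} (ρ : Set (Fin d → ℕ))
    (hfin : ρ.Finite) (hdown : DownClosed ρ)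
    (A : (Fin d → ℕ) → ℕ) (hsupp : Function.support A ⊆ ρ) :
    (∀ i ∈ Cr ρ, 0 < A i) ↔ Function.support (lpt A) = ρ := by
  rw [support_lpt (hfin.subset hsupp), Cr_eq_setOf_maximal hdown.isLowerSet,
    lowerClosure_eq_iff_setOf_maximal_subset hfin hdown.isLowerSet hsupp]
  simp only [Set.subset_def, Function.mem_support, pos_iff_ne_zero]
end
end
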